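/- arXiv:1811.08741 — 4 statements merged into one kernel-verified Lean document; each statement's English description precedes it below -/
import Mathlib

section
/- Let d ≥ 2 and let ℓ ∈ ℤ^d with |ℓ| ≥ 2. Then the lattice sum ∑_{m ∈ ℤ^d} (1+|ℓ−m|)^{−d} (1+|m|)^{−d} is bounded by C |ℓ|^{−d} log|ℓ|, where C depends only on d. -/
open scoped BigOperators

noncomputable def toE {d : ℕ} (x : Fin d → ℤ) : EuclideanSpace ℝ (Fin d) :=
  WithLp.toLp 2 (fun i => (x i : ℝ))

/-!
Write `L = |ℓ|` and split `ℤ^d` into the points within `L/2` of `0`, those within `L/2` of `ℓ`,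
and the rest. Near `0` the factor `(1+|ℓ-m|)^{-d}` is at most `(2/L)^d`, while the sum of
`(1+|m|)^{-d}` over `|m| ≤ L/2` is `O(log L)` because the sup-norm sphere of radius `k` has
`O(k^{d-1})` lattice points; the region near `ℓ` is the mirror image under `m ↦ ℓ - m`. On the
rest `1+|m| ≤ 3(1+|ℓ-m|)`, so the summand is `O((1+|m|)^{-2d})`, whose tail over `|m| > L/2` is
`O(L^{-d})` by telescoping.
-/

open Finset

lemma natCast_div_pow_succ_le_inv_pow_sub (n : ℕ) {x : ℝ} (hx : 0 < x) :
    n / (x + 1) ^ (n + 1) ≤ (x ^ n)⁻¹ - ((x + 1) ^ n)⁻¹ := by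
  have hbern := one_add_mul_le_pow (a := x⁻¹) (by linarith [inv_pos.2 hx]) n
  have hscale : x ^ n * (1 + x⁻¹) ^ n = (x + 1) ^ n := by
    rw [← mul_pow, mul_add, mul_inv_cancel₀ hx.ne', mul_one]
  have hmono : x ^ n ≤ (x + 1) ^ n := pow_le_pow_left₀ hx.le (by linarith) n
  have key : n * x ^ n ≤ x * ((x + 1) ^ n - x ^ n) := by
    have h1 : x ^ n * (1 + n * x⁻¹) ≤ (x + 1) ^ n :=
      hscale ▸ mul_le_mul_of_nonneg_left hbern (by positivity)
    have h2 : x * (x ^ n * (1 + n * x⁻¹)) = x * x ^ n + n * x ^ n := by field_simp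
    nlinarith
  rw [inv_sub_inv (by positivity) (by positivity), div_le_div_iff₀ (by positivity) (by positivity),
    pow_succ]
  have := mul_le_mul_of_nonneg_right key (by positivity : 0 ≤ (x + 1) ^ n)
  nlinarith [mul_nonneg (sub_nonneg.2 hmono) (by positivity : (0:ℝ) ≤ (x + 1) ^ n)]

lemma one_add_norm_le_three_mul {E : Type*} [SeminormedAddCommGroup E] {x y : E}
    (h : ‖x‖ ≤ 2 * ‖x - y‖) : 1 + ‖y‖ ≤ 3 * (1 + ‖x - y‖) := by
  have := norm_sub_le x (x - y)
  rw [sub_sub_cancel] at this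
  linarith

namespace LatticeSum

variable {d : ℕ}

def supNorm (m : Fin d → ℤ) : ℕ := univ.sup fun i => (m i).natAbs

lemma mem_Icc_neg_iff {n : ℕ} {m : Fin d → ℤ} : m ∈ Icc (-n : Fin d → ℤ) n ↔ supNorm m ≤ n := by
  simp only [mem_Icc, Pi.le_def, supNorm, Finset.sup_le_iff, mem_univ, true_implies,
    Pi.neg_apply, Pi.natCast_apply, ← forall_and]
  refine forall_congr' fun i => ?_
  omega

lemma mem_box {n : ℕ} {m : Fin d → ℤ} : m ∈ (box n : Finset (Fin d → ℤ)) ↔ supNorm m = n := by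
  cases n with
  | zero => simp [← Nat.le_zero, ← mem_Icc_neg_iff (n := 0)]
  | succ n =>
    rw [box_succ_eq_sdiff, mem_sdiff, mem_Icc_neg_iff, mem_Icc_neg_iff]
    omega

lemma card_box_le (hd : 0 < d) (n : ℕ) :
    #(box n : Finset (Fin d → ℤ)) ≤ d * 2 ^ d * (n + 1) ^ (d - 1) := by
  cases n with
  | zero =>
    rw [box_zero, card_singleton]
    exact Nat.one_le_iff_ne_zero.2 (by positivity)
  | succ n =>
    have hsub : Icc (-n : Fin d → ℤ) n ⊆ Icc (-n.succ) n.succ := fun m hm => by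
      rw [mem_Icc_neg_iff] at hm ⊢
      omega
    rw [box_succ_eq_sdiff, card_sdiff_of_subset hsub, Pi.card_Icc, Pi.card_Icc]
    simp only [Pi.neg_apply, Pi.natCast_apply, Int.card_Icc, prod_const, card_univ,
      Fintype.card_fin]
    rw [show (n.succ + 1 - -n.succ : ℤ).toNat = 2 * n + 3 by omega,
      show (n + 1 - -n : ℤ).toNat = 2 * n + 1 by omega]
    have hmono : (2 * n + 1) ^ d ≤ (2 * n + 3) ^ d := Nat.pow_le_pow_left (by omega) d
    have hdiff := (le_abs_self _).trans (abs_pow_sub_pow_le (α := ℤ) (2 * n + 3) (2 * n + 1) d)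
    have hmax : max |(2 * n + 3 : ℤ)| |2 * n + 1| = 2 * n + 3 := by
      rw [abs_of_nonneg, abs_of_nonneg, max_eq_left] <;> omega
    rw [hmax, show (2 * n + 3 : ℤ) - (2 * n + 1) = 2 by ring, abs_two] at hdiff
    have hpow : (2 * n + 3 : ℤ) ^ (d - 1) ≤ (2 * (n + 1 + 1)) ^ (d - 1) :=
      pow_le_pow_left₀ (by positivity) (by omega) _
    have htwo : (2 : ℤ) * 2 ^ (d - 1) = 2 ^ d := by rw [← pow_succ', Nat.sub_add_cancel hd]
    zify [hmono]
    calc ((2 * n + 3 : ℕ) : ℤ) ^ d - ((2 * n + 1 : ℕ) : ℤ) ^ d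
        ≤ 2 * d * (2 * n + 3) ^ (d - 1) := by push_cast; linarith
      _ ≤ 2 * d * (2 * (n + 1 + 1)) ^ (d - 1) := by gcongr
      _ = d * 2 ^ d * (n + 1 + 1) ^ (d - 1) := by rw [mul_pow, ← htwo]; ring

lemma sum_comp_supNorm_le {g : ℕ → ℝ} (hg : ∀ k, 0 ≤ g k) {u : Finset (Fin d → ℤ)}
    {s : Finset ℕ} (hus : ∀ m ∈ u, supNorm m ∈ s) :
    ∑ m ∈ u, g (supNorm m) ≤ ∑ k ∈ s, #(box k : Finset (Fin d → ℤ)) * g k := by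
  rw [← sum_fiberwise_of_maps_to hus]
  refine sum_le_sum fun k _ => ?_
  rw [sum_congr rfl fun m hm => by rw [(mem_filter.1 hm).2], sum_const, nsmul_eq_mul]
  gcongr
  · exact hg k
  · exact fun m hm => mem_box.2 (mem_filter.1 hm).2

lemma supNorm_le_norm_toE (m : Fin d → ℤ) : (supNorm m : ℝ) ≤ ‖toE m‖ := by
  refine (Nat.cast_le.2 (Finset.sup_le fun i _ => Nat.le_floor ?_)).trans
    (Nat.floor_le (norm_nonneg (toE m)))
  simpa [toE, Nat.cast_natAbs] using PiLp.norm_apply_le (toE m) i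

lemma norm_toE_le (m : Fin d → ℤ) : ‖toE m‖ ≤ d * supNorm m := by
  have hcoord (i : Fin d) : ‖toE m i‖ ≤ supNorm m := by
    simpa [supNorm, toE, Nat.cast_natAbs] using
      (Nat.cast_le (α := ℝ)).2 (le_sup (f := fun i => (m i).natAbs) (mem_univ i))
  rw [EuclideanSpace.norm_eq]
  refine Real.sqrt_le_iff.2 ⟨by positivity, ?_⟩
  calc ∑ i, ‖toE m i‖ ^ 2 ≤ ∑ _i : Fin d, (supNorm m : ℝ) ^ 2 :=
        sum_le_sum fun i _ => pow_le_pow_left₀ (norm_nonneg _) (hcoord i) 2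
    _ = d * (supNorm m : ℝ) ^ 2 := by simp
    _ ≤ (d * supNorm m) ^ 2 := by
        rw [mul_pow]
        gcongr
        exact_mod_cast Nat.le_self_pow two_ne_zero d

lemma sum_inv_one_add_supNorm_pow_le (hd : 0 < d) (K : ℕ) {u : Finset (Fin d → ℤ)}
    (hu : ∀ m ∈ u, supNorm m ≤ K) :
    ∑ m ∈ u, ((1 + supNorm m : ℝ) ^ d)⁻¹ ≤ d * 2 ^ d * (1 + Real.log (K + 1)) := by
  have hterm (k : ℕ) : (#(box k : Finset (Fin d → ℤ)) : ℝ) * ((1 + k : ℝ) ^ d)⁻¹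
      ≤ d * 2 ^ d * ((k : ℝ) + 1)⁻¹ := by
    have hcard : (#(box k : Finset (Fin d → ℤ)) : ℝ) ≤ d * 2 ^ d * ((k : ℝ) + 1) ^ (d - 1) := by
      exact_mod_cast card_box_le hd k
    calc _ ≤ d * 2 ^ d * ((k : ℝ) + 1) ^ (d - 1) * ((1 + k : ℝ) ^ d)⁻¹ := by gcongr
      _ = d * 2 ^ d * ((k : ℝ) + 1)⁻¹ := by
        rw [add_comm (1 : ℝ), pow_sub₀ _ (by positivity) hd, pow_one]
        field_simp
  calc ∑ m ∈ u, ((1 + supNorm m : ℝ) ^ d)⁻¹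
      ≤ ∑ k ∈ range (K + 1), #(box k : Finset (Fin d → ℤ)) * ((1 + k : ℝ) ^ d)⁻¹ :=
        sum_comp_supNorm_le (g := fun k => ((1 + k : ℝ) ^ d)⁻¹) (fun k => by positivity)
          fun m hm => mem_range.2 (Nat.lt_succ_of_le (hu m hm))
    _ ≤ ∑ k ∈ range (K + 1), d * 2 ^ d * ((k : ℝ) + 1)⁻¹ := sum_le_sum fun k _ => hterm k
    _ = d * 2 ^ d * harmonic (K + 1) := by simp [harmonic, mul_sum]
    _ ≤ d * 2 ^ d * (1 + Real.log (K + 1)) := by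
        gcongr
        exact_mod_cast harmonic_le_one_add_log (K + 1)

lemma sum_inv_one_add_supNorm_pow_two_mul_le (hd : 0 < d) (J : ℕ) {u : Finset (Fin d → ℤ)}
    (hu : ∀ m ∈ u, J < supNorm m) :
    ∑ m ∈ u, ((1 + supNorm m : ℝ) ^ (2 * d))⁻¹ ≤ 2 ^ d * (((J : ℝ) + 1) ^ d)⁻¹ := by
  set N := u.sup supNorm
  have hterm (k : ℕ) (hk : 0 < k) :
      (#(box k : Finset (Fin d → ℤ)) : ℝ) * ((1 + k : ℝ) ^ (2 * d))⁻¹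
        ≤ 2 ^ d * (((k : ℝ) ^ d)⁻¹ - (((k + 1 : ℕ) : ℝ) ^ d)⁻¹) := by
    have hcard : (#(box k : Finset (Fin d → ℤ)) : ℝ) ≤ d * 2 ^ d * ((k : ℝ) + 1) ^ (d - 1) := by
      exact_mod_cast card_box_le hd k
    calc _ ≤ d * 2 ^ d * ((k : ℝ) + 1) ^ (d - 1) * ((1 + k : ℝ) ^ (2 * d))⁻¹ := by gcongr
      _ = 2 ^ d * (d / ((k : ℝ) + 1) ^ (d + 1)) := by
        rw [add_comm (1 : ℝ), pow_sub₀ _ (by positivity) hd, pow_one]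
        field_simp
        ring
      _ ≤ _ := by
        push_cast
        gcongr
        exact natCast_div_pow_succ_le_inv_pow_sub d (by exact_mod_cast hk)
  calc ∑ m ∈ u, ((1 + supNorm m : ℝ) ^ (2 * d))⁻¹
      ≤ ∑ k ∈ Ico (J + 1) (J + 1 + N), #(box k : Finset (Fin d → ℤ)) * ((1 + k : ℝ) ^ (2 * d))⁻¹ :=
        sum_comp_supNorm_le (g := fun k => ((1 + k : ℝ) ^ (2 * d))⁻¹) (fun k => by positivity)
          fun m hm => mem_Ico.2 ⟨hu m hm, by have := le_sup (f := supNorm) hm; omega⟩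
    _ ≤ ∑ k ∈ Ico (J + 1) (J + 1 + N), 2 ^ d * (((k : ℝ) ^ d)⁻¹ - (((k + 1 : ℕ) : ℝ) ^ d)⁻¹) :=
        sum_le_sum fun k hk => hterm k (by have := (mem_Ico.1 hk).1; omega)
    _ = 2 ^ d * ((((J + 1 : ℕ) : ℝ) ^ d)⁻¹ - (((J + 1 + N : ℕ) : ℝ) ^ d)⁻¹) := by
        have htele := sum_Ico_sub (fun k : ℕ => -((k : ℝ) ^ d)⁻¹) (show J + 1 ≤ J + 1 + N by omega)
        simp only [sub_neg_eq_add, neg_add_eq_sub] at htele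
        rw [← mul_sum, htele]
    _ ≤ 2 ^ d * (((J : ℝ) + 1) ^ d)⁻¹ := by
        push_cast
        gcongr
        exact sub_le_self _ (by positivity)

lemma toE_sub (a b : Fin d → ℤ) : toE (a - b) = toE a - toE b := by
  ext i
  simp [toE]

noncomputable def summand (ℓ m : Fin d → ℤ) : ℝ :=
  ((1 + ‖toE (ℓ - m)‖) ^ d)⁻¹ * ((1 + ‖toE m‖) ^ d)⁻¹

lemma summand_nonneg (ℓ m : Fin d → ℤ) : 0 ≤ summand ℓ m := by
  unfold summand
  positivity

lemma summand_sub_right (ℓ m : Fin d → ℤ) : summand ℓ (ℓ - m) = summand ℓ m := by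
  rw [summand, summand, sub_sub_cancel, mul_comm]

lemma sum_summand_near_le (hd : 0 < d) {ℓ : Fin d → ℤ} (hℓ : 2 ≤ ‖toE ℓ‖)
    {u : Finset (Fin d → ℤ)} (hu : ∀ m ∈ u, ‖toE m‖ ≤ ‖toE ℓ‖ / 2) :
    ∑ m ∈ u, summand ℓ m
      ≤ ((‖toE ℓ‖ / 2) ^ d)⁻¹ * (d * 2 ^ d * (1 + Real.log ‖toE ℓ‖)) := by
  set L := ‖toE ℓ‖
  have hpoint : ∀ m ∈ u, summand ℓ m ≤ ((L / 2) ^ d)⁻¹ * ((1 + supNorm m : ℝ) ^ d)⁻¹ := by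
    intro m hm
    have hfar : L / 2 ≤ 1 + ‖toE (ℓ - m)‖ := by
      have := norm_sub_norm_le (toE ℓ) (toE m)
      rw [← toE_sub] at this
      linarith [hu m hm]
    unfold summand
    gcongr
    exact supNorm_le_norm_toE m
  have hK : ((⌊L / 2⌋₊ : ℕ) : ℝ) + 1 ≤ L := by linarith [Nat.floor_le (by positivity : 0 ≤ L / 2)]
  calc ∑ m ∈ u, summand ℓ m ≤ ∑ m ∈ u, ((L / 2) ^ d)⁻¹ * ((1 + supNorm m : ℝ) ^ d)⁻¹ :=
        sum_le_sum hpoint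
    _ ≤ ((L / 2) ^ d)⁻¹ * (d * 2 ^ d * (1 + Real.log (⌊L / 2⌋₊ + 1))) := by
        rw [← mul_sum]
        gcongr
        refine sum_inv_one_add_supNorm_pow_le hd _ fun m hm => Nat.le_floor ?_
        exact (supNorm_le_norm_toE m).trans (hu m hm)
    _ ≤ ((L / 2) ^ d)⁻¹ * (d * 2 ^ d * (1 + Real.log L)) := by
        gcongr

lemma sum_summand_far_le (hd : 0 < d) {ℓ : Fin d → ℤ} (hℓ : 0 < ‖toE ℓ‖)
    {u : Finset (Fin d → ℤ)} (hu : ∀ m ∈ u, ‖toE ℓ‖ / 2 < ‖toE m‖ ∧ ‖toE ℓ‖ / 2 < ‖toE (ℓ - m)‖) :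
    ∑ m ∈ u, summand ℓ m ≤ 3 ^ d * 2 ^ d * ((‖toE ℓ‖ / (2 * d)) ^ d)⁻¹ := by
  set L := ‖toE ℓ‖
  set J := ⌊L / (2 * d)⌋₊
  have hpoint : ∀ m ∈ u, summand ℓ m ≤ 3 ^ d * ((1 + supNorm m : ℝ) ^ (2 * d))⁻¹ := by
    intro m hm
    have hcmp := one_add_norm_le_three_mul (x := toE ℓ) (y := toE m)
      (by rw [← toE_sub]; linarith [(hu m hm).2])
    rw [← toE_sub] at hcmp
    calc summand ℓ m ≤ (((1 + ‖toE m‖) / 3) ^ d)⁻¹ * ((1 + ‖toE m‖) ^ d)⁻¹ := by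
          unfold summand
          gcongr
          linarith
      _ = 3 ^ d * ((1 + ‖toE m‖) ^ (2 * d))⁻¹ := by
          rw [div_pow, two_mul, pow_add]
          field_simp
      _ ≤ 3 ^ d * ((1 + supNorm m : ℝ) ^ (2 * d))⁻¹ := by
          gcongr
          exact supNorm_le_norm_toE m
  have hJ : ∀ m ∈ u, J < supNorm m := by
    intro m hm
    rw [← Nat.cast_lt (α := ℝ)]
    refine (Nat.floor_le (by positivity)).trans_lt ?_
    rw [div_lt_iff₀ (by positivity)]
    nlinarith [norm_toE_le m, (hu m hm).1]
  calc ∑ m ∈ u, summand ℓ m ≤ ∑ m ∈ u, 3 ^ d * ((1 + supNorm m : ℝ) ^ (2 * d))⁻¹ :=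
        sum_le_sum hpoint
    _ ≤ 3 ^ d * (2 ^ d * (((J : ℝ) + 1) ^ d)⁻¹) := by
        rw [← mul_sum]
        gcongr
        exact sum_inv_one_add_supNorm_pow_two_mul_le hd J hJ
    _ ≤ 3 ^ d * 2 ^ d * ((L / (2 * d)) ^ d)⁻¹ := by
        rw [← mul_assoc]
        gcongr
        exact (Nat.lt_floor_add_one _).le

lemma sum_summand_le (hd : 0 < d) {ℓ : Fin d → ℤ} (hℓ : 2 ≤ ‖toE ℓ‖) (u : Finset (Fin d → ℤ)) :
    ∑ m ∈ u, summand ℓ m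
      ≤ 2 * (((‖toE ℓ‖ / 2) ^ d)⁻¹ * (d * 2 ^ d * (1 + Real.log ‖toE ℓ‖)))
        + 3 ^ d * 2 ^ d * ((‖toE ℓ‖ / (2 * d)) ^ d)⁻¹ := by
  set L := ‖toE ℓ‖
  set rest := u.filter fun m => ¬‖toE m‖ ≤ L / 2
  have hnear := sum_summand_near_le hd hℓ (u := u.filter fun m => ‖toE m‖ ≤ L / 2)
    fun m hm => (mem_filter.1 hm).2
  have hreflected : ∑ m ∈ rest.filter fun m => ‖toE (ℓ - m)‖ ≤ L / 2, summand ℓ m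
      ≤ ((L / 2) ^ d)⁻¹ * (d * 2 ^ d * (1 + Real.log L)) := by
    rw [← sum_congr rfl fun m _ => summand_sub_right ℓ m,
      ← sum_image fun a _ b _ h => sub_right_injective h]
    refine sum_summand_near_le hd hℓ fun n hn => ?_
    obtain ⟨m, hm, rfl⟩ := mem_image.1 hn
    exact (mem_filter.1 hm).2
  have hfar := sum_summand_far_le hd (by linarith)
    (u := rest.filter fun m => ¬‖toE (ℓ - m)‖ ≤ L / 2) fun m hm => by
      simp only [rest, mem_filter, not_le] at hm
      exact ⟨hm.1.2, hm.2⟩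
  rw [← sum_filter_add_sum_filter_not u fun m => ‖toE m‖ ≤ L / 2,
    ← sum_filter_add_sum_filter_not rest fun m => ‖toE (ℓ - m)‖ ≤ L / 2]
  linarith

lemma sum_summand_le_log (hd : 0 < d) {ℓ : Fin d → ℤ} (hℓ : 2 ≤ ‖toE ℓ‖)
    (u : Finset (Fin d → ℤ)) :
    ∑ m ∈ u, summand ℓ m
      ≤ (6 * 4 ^ d * d + 2 * (12 * d) ^ d) * (‖toE ℓ‖ ^ d)⁻¹ * Real.log ‖toE ℓ‖ := by
  set L := ‖toE ℓ‖
  have hlog : 1 ≤ 2 * Real.log L := by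
    linarith [Real.log_two_gt_d9, Real.log_le_log two_pos hℓ]
  have hform : 2 * (((L / 2) ^ d)⁻¹ * (d * 2 ^ d * (1 + Real.log L)))
      + 3 ^ d * 2 ^ d * ((L / (2 * d)) ^ d)⁻¹
      = (2 * 4 ^ d * d * (1 + Real.log L) + (12 * d) ^ d) * (L ^ d)⁻¹ := by
    have h4 : (4 : ℝ) ^ d = 2 ^ d * 2 ^ d := by rw [← mul_pow]; norm_num
    have h12 : (12 : ℝ) ^ d = 2 ^ d * 2 ^ d * 3 ^ d := by rw [← mul_pow, ← mul_pow]; norm_num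
    simp only [h4, h12, div_pow, mul_pow]
    field_simp
  refine (sum_summand_le hd hℓ u).trans ?_
  rw [hform, mul_right_comm _ _ (Real.log L)]
  gcongr
  have h4 := mul_le_mul_of_nonneg_left hlog (by positivity : (0 : ℝ) ≤ 4 ^ d * d)
  have h12 := mul_le_mul_of_nonneg_left hlog (by positivity : (0 : ℝ) ≤ (12 * d) ^ d)
  linarith

end LatticeSum

open LatticeSum in
theorem stmt0_general (d : ℕ) :
    ∃ C : ℝ, 0 < C ∧ ∀ ℓ : Fin d → ℤ, 2 ≤ ‖toE ℓ‖ →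
      (∑' m : Fin d → ℤ,
          (1 + ‖toE (ℓ - m)‖) ^ (-(d : ℝ)) * (1 + ‖toE m‖) ^ (-(d : ℝ)))
        ≤ C * ‖toE ℓ‖ ^ (-(d : ℝ)) * Real.log ‖toE ℓ‖ := by
  rcases Nat.eq_zero_or_pos d with rfl | hd
  · refine ⟨1, one_pos, fun ℓ hℓ => ?_⟩
    norm_num [EuclideanSpace.norm_eq] at hℓ
  refine ⟨6 * 4 ^ d * d + 2 * (12 * d) ^ d, by positivity, fun ℓ hℓ => ?_⟩
  have hsummand (m : Fin d → ℤ) :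
      (1 + ‖toE (ℓ - m)‖) ^ (-(d : ℝ)) * (1 + ‖toE m‖) ^ (-(d : ℝ)) = summand ℓ m := by
    rw [Real.rpow_neg (by positivity), Real.rpow_neg (by positivity), Real.rpow_natCast,
      Real.rpow_natCast, summand]
  rw [tsum_congr hsummand, Real.rpow_neg (by linarith), Real.rpow_natCast]
  exact Real.tsum_le_of_sum_le (summand_nonneg ℓ) (sum_summand_le_log hd hℓ)

/-- for `d ≥ 2` and `ℓ ∈ ℤ^d` with `|ℓ| ≥ 2`,
`∑_{m ∈ ℤ^d} (1+|ℓ−m|)^{−d} (1+|m|)^{−d} ≤ C |ℓ|^{−d} log|ℓ|` with `C = C(d)`. -/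
theorem stmt0 (d : ℕ) (hd : 2 ≤ d) :
    ∃ C : ℝ, 0 < C ∧ ∀ ℓ : Fin d → ℤ, 2 ≤ ‖toE ℓ‖ →
      (∑' m : Fin d → ℤ,
          (1 + ‖toE (ℓ - m)‖) ^ (-(d : ℝ)) * (1 + ‖toE m‖) ^ (-(d : ℝ)))
        ≤ C * ‖toE ℓ‖ ^ (-(d : ℝ)) * Real.log ‖toE ℓ‖ :=
  stmt0_general d
end

section
/- Let d ≥ 1, let G : ℤ^d → ℝ be even, let ρ ∈ ℤ^d be fixed, and suppose |G(ℓ+ρ) − G(ℓ)| ≤ C₀(1+|ℓ|)^{1−d} for all ℓ ∈ ℤ^d. Let Λ_N = ℤ^d ∩ [−N,N]^d (a point-symmetric box). Then |∑_{ℓ ∈ Λ_N} (G(ℓ+ρ) − G(ℓ))| ≤ C, with C independent of N. -/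
open scoped BigOperators

lemma coord_le_norm_toE {d : ℕ} (x : Fin d → ℤ) (i : Fin d) :
    |(x i : ℝ)| ≤ ‖toE x‖ := by
  rw [EuclideanSpace.norm_eq]
  have h : |(x i : ℝ)| = Real.sqrt (|(x i : ℝ)| ^ 2) := by
    rw [Real.sqrt_sq (abs_nonneg _)]
  rw [h]
  apply Real.sqrt_le_sqrt
  have := Finset.single_le_sum (f := fun j => ‖toE x j‖ ^ 2)
    (fun j _ => sq_nonneg _) (Finset.mem_univ i)
  simpa [toE, sq_abs] using this

lemma pow_succ_sub_pow_succ_le (a b : ℝ) (hb : 0 ≤ b) (hab : b ≤ a) :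
    ∀ k : ℕ, a ^ (k + 1) - b ^ (k + 1) ≤ (k + 1 : ℝ) * (a - b) * a ^ k := by
  intro k
  induction k with
  | zero => simp
  | succ n ih =>
    have ha : 0 ≤ a := hb.trans hab
    have hbk : b ^ (n + 1) ≤ a ^ (n + 1) := pow_le_pow_left₀ hb hab _
    have h2 : (a - b) * b ^ (n + 1) ≤ (a - b) * a ^ (n + 1) :=
      mul_le_mul_of_nonneg_left hbk (by linarith)
    have h3 : a * (a ^ (n + 1) - b ^ (n + 1)) ≤ a * ((n + 1 : ℝ) * (a - b) * a ^ n) :=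
      mul_le_mul_of_nonneg_left ih ha
    have h5 : a ^ (n + 2) - b ^ (n + 2)
        = a * (a ^ (n + 1) - b ^ (n + 1)) + (a - b) * b ^ (n + 1) := by ring
    calc a ^ (n + 1 + 1) - b ^ (n + 1 + 1)
        = a * (a ^ (n + 1) - b ^ (n + 1)) + (a - b) * b ^ (n + 1) := by
          rw [show n + 1 + 1 = n + 2 from rfl, h5]
      _ ≤ a * ((n + 1 : ℝ) * (a - b) * a ^ n) + (a - b) * a ^ (n + 1) := add_le_add h3 h2
      _ = ((n : ℝ) + 1 + 1) * (a - b) * a ^ (n + 1) := by ring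
      _ = ((n + 1 : ℕ) + 1 : ℝ) * (a - b) * a ^ (n + 1) := by push_cast; ring

/-- if `G : ℤ^d → ℝ` is even and its discrete gradient
`D_ρ G(ℓ) = G(ℓ+ρ) − G(ℓ)` satisfies `|D_ρ G(ℓ)| ≤ C₀(1+|ℓ|)^{1−d}`, then the sum of
`D_ρ G` over the symmetric box `Λ_N = ℤ^d ∩ [−N,N]^d` is bounded uniformly in `N`. -/
theorem stmt3 (d : ℕ) (hd : 1 ≤ d) (ρ : Fin d → ℤ) (C₀ : ℝ)
    (G : (Fin d → ℤ) → ℝ)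
    (heven : ∀ ℓ, G (-ℓ) = G ℓ)
    (hdecay : ∀ ℓ, |G (ℓ + ρ) - G ℓ| ≤ C₀ * (1 + ‖toE ℓ‖) ^ ((1 : ℝ) - d)) :
    ∃ C : ℝ, ∀ N : ℕ,
      |∑ ℓ ∈ Finset.Icc (fun _ : Fin d => -(N : ℤ)) (fun _ : Fin d => (N : ℤ)),
          (G (ℓ + ρ) - G ℓ)| ≤ C := by
  classical
  set κ : ℕ := d - 1 with hκ
  have hκd : d = κ + 1 := (Nat.succ_pred_eq_of_pos hd).symm
  have hexp : ((1 : ℝ) - d) = -(κ : ℝ) := by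
    have h : ((κ : ℕ) : ℝ) = (d : ℝ) - 1 := by
      rw [hκ, Nat.cast_sub hd]; norm_num
    rw [h]; ring
  have hC₀ : 0 ≤ C₀ := by
    have h := hdecay 0
    have hpos : (0 : ℝ) < (1 + ‖toE (0 : Fin d → ℤ)‖) ^ ((1 : ℝ) - d) :=
      Real.rpow_pos_of_pos (by positivity) _
    nlinarith [abs_nonneg (G (0 + ρ) - G 0)]
  have hdecay' : ∀ ℓ, |G (ℓ + ρ) - G ℓ| ≤ C₀ * ((1 + ‖toE ℓ‖) ^ κ)⁻¹ := by
    intro ℓ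
    have hb : (0 : ℝ) < 1 + ‖toE ℓ‖ := by positivity
    have h := hdecay ℓ
    rwa [hexp, Real.rpow_neg hb.le, Real.rpow_natCast] at h
  set R : ℕ := Finset.univ.sup (fun i => (ρ i).natAbs) with hR
  have hRρ : ∀ i, |ρ i| ≤ (R : ℤ) := by
    intro i
    have h : (ρ i).natAbs ≤ R := Finset.le_sup (f := fun i => (ρ i).natAbs) (Finset.mem_univ i)
    rw [Int.abs_eq_natAbs]
    exact_mod_cast h
  refine ⟨C₀ * ((4 * R + 1 : ℝ) ^ d + (d : ℝ) * (2 * R) * 8 ^ κ), fun N => ?_⟩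
  have hCnn : 0 ≤ (d : ℝ) * (2 * R) * 8 ^ κ := by positivity
  have hCnn2 : 0 ≤ (4 * R + 1 : ℝ) ^ d := by positivity
  set lo : Fin d → ℤ := fun _ : Fin d => -(N : ℤ) with hlo
  set hi : Fin d → ℤ := fun _ : Fin d => (N : ℤ) with hhi
  set Λ : Finset (Fin d → ℤ) := Finset.Icc lo hi with hΛ
  have memΛ : ∀ x : Fin d → ℤ, x ∈ Λ ↔ ∀ i, -(N : ℤ) ≤ x i ∧ x i ≤ N := by
    intro x
    simp only [hΛ, Finset.mem_Icc, Pi.le_def, hlo, hhi, ← forall_and]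
  set Λ' : Finset (Fin d → ℤ) := Λ.image (· + ρ) with hΛ'
  have memΛ' : ∀ x : Fin d → ℤ, x ∈ Λ' ↔ x - ρ ∈ Λ := by
    intro x
    simp only [hΛ', Finset.mem_image]
    constructor
    · rintro ⟨a, ha, rfl⟩; simpa using ha
    · intro h; exact ⟨x - ρ, h, by simp⟩
  set A : Finset (Fin d → ℤ) := Λ' \ Λ with hA
  have key : ∑ ℓ ∈ Λ, (G (ℓ + ρ) - G ℓ) = ∑ x ∈ A, (G ((x - ρ) + ρ) - G (x - ρ)) := by
    have h1 : ∑ ℓ ∈ Λ, G (ℓ + ρ) = ∑ x ∈ Λ', G x := by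
      rw [hΛ', Finset.sum_image]
      intro a _ b _ h
      exact add_right_cancel h
    have h2 : ∑ y ∈ Λ \ Λ', G y = ∑ x ∈ A, G (x - ρ) := by
      refine Finset.sum_nbij' (i := fun y => ρ - y) (j := fun x => ρ - x) ?_ ?_ ?_ ?_ ?_
      · intro y hy
        rw [Finset.mem_sdiff] at hy
        obtain ⟨hy1, hy2⟩ := hy
        rw [memΛ] at hy1
        rw [hA, Finset.mem_sdiff]
        constructor
        · rw [memΛ', memΛ]
          intro i
          have := hy1 i
          simp only [Pi.sub_apply]
          omega
        · rw [memΛ]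
          push_neg
          rw [memΛ', memΛ] at hy2
          push_neg at hy2
          obtain ⟨i, hi'⟩ := hy2
          refine ⟨i, ?_⟩
          simp only [Pi.sub_apply] at hi' ⊢
          omega
      · intro x hx
        rw [hA, Finset.mem_sdiff] at hx
        obtain ⟨hx1, hx2⟩ := hx
        rw [memΛ', memΛ] at hx1
        rw [Finset.mem_sdiff]
        constructor
        · rw [memΛ]
          intro i
          have := hx1 i
          simp only [Pi.sub_apply] at this ⊢
          omega
        · rw [memΛ']
          rw [memΛ] at hx2
          push_neg at hx2
          obtain ⟨i, hi'⟩ := hx2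
          rw [memΛ]
          push_neg
          refine ⟨i, ?_⟩
          simp only [Pi.sub_apply] at hi' ⊢
          omega
      · intro y _; exact sub_sub_cancel ρ y
      · intro x _; exact sub_sub_cancel ρ x
      · intro y _
        have h : (ρ - y) - ρ = -y := by abel
        rw [h, heven]
    rw [Finset.sum_sub_distrib, h1, ← Finset.sum_sdiff_sub_sum_sdiff, h2, ← hA,
      ← Finset.sum_sub_distrib]
    refine Finset.sum_congr rfl fun x _ => ?_
    simp
  rw [key]
  have habs : |∑ x ∈ A, (G ((x - ρ) + ρ) - G (x - ρ))|
      ≤ ∑ x ∈ A, C₀ * ((1 + ‖toE (x - ρ)‖) ^ κ)⁻¹ :=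
    (Finset.abs_sum_le_sum_abs _ _).trans (Finset.sum_le_sum fun x _ => hdecay' _)
  refine habs.trans ?_
  have cardΛ : (Λ.card : ℝ) = (2 * (N : ℝ) + 1) ^ d := by
    rw [hΛ, Pi.card_Icc]
    simp only [hlo, hhi, Int.card_Icc]
    have h : ((N : ℤ) + 1 - -(N : ℤ)).toNat = 2 * N + 1 := by omega
    rw [h, Finset.prod_const, Finset.card_univ, Fintype.card_fin]
    push_cast
    ring
  by_cases hcase : N ≤ 2 * R
  · -- small N : crude bound
    have hterm : ∀ x ∈ A, C₀ * ((1 + ‖toE (x - ρ)‖) ^ κ)⁻¹ ≤ C₀ := by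
      intro x _
      have h1 : (1 : ℝ) ≤ 1 + ‖toE (x - ρ)‖ := by
        have := norm_nonneg (toE (x - ρ)); linarith
      have h2 : (1 : ℝ) ≤ (1 + ‖toE (x - ρ)‖) ^ κ := one_le_pow₀ h1
      have h3 : ((1 + ‖toE (x - ρ)‖) ^ κ)⁻¹ ≤ 1 := inv_le_one_of_one_le₀ h2
      nlinarith
    have hsum := Finset.sum_le_card_nsmul A _ C₀ hterm
    rw [nsmul_eq_mul] at hsum
    have hcard : (A.card : ℝ) ≤ (4 * R + 1 : ℝ) ^ d := by
      have h1 : A.card ≤ Λ'.card := Finset.card_le_card (Finset.sdiff_subset)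
      have h2 : Λ'.card ≤ Λ.card := Finset.card_image_le
      have h3 : (A.card : ℝ) ≤ (Λ.card : ℝ) := by exact_mod_cast h1.trans h2
      rw [cardΛ] at h3
      refine h3.trans (pow_le_pow_left₀ (by positivity) ?_ _)
      have : (N : ℝ) ≤ 2 * R := by exact_mod_cast hcase
      linarith
    calc ∑ x ∈ A, C₀ * ((1 + ‖toE (x - ρ)‖) ^ κ)⁻¹ ≤ (A.card : ℝ) * C₀ := hsum
      _ ≤ (4 * R + 1 : ℝ) ^ d * C₀ := mul_le_mul_of_nonneg_right hcard hC₀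
      _ ≤ C₀ * ((4 * R + 1 : ℝ) ^ d + (d : ℝ) * (2 * R) * 8 ^ κ) := by nlinarith
  · -- large N
    push_neg at hcase
    set a : ℝ := 2 * (N : ℝ) + 2 * R + 1 with ha
    have ha1 : (1 : ℝ) ≤ a := by
      rw [ha]
      have h1 : (0:ℝ) ≤ (N:ℝ) := Nat.cast_nonneg N
      have h2 : (0:ℝ) ≤ (R:ℝ) := Nat.cast_nonneg R
      linarith
    have haκ : (0 : ℝ) < a ^ κ := by positivity
    -- big box
    set lo' : Fin d → ℤ := fun _ : Fin d => -((N : ℤ) + R) with hlo'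
    set hi' : Fin d → ℤ := fun _ : Fin d => (N : ℤ) + R with hhi'
    set B : Finset (Fin d → ℤ) := Finset.Icc lo' hi' with hB
    have memB : ∀ x : Fin d → ℤ, x ∈ B ↔ ∀ i, -((N : ℤ) + R) ≤ x i ∧ x i ≤ (N : ℤ) + R := by
      intro x
      simp only [hB, Finset.mem_Icc, Pi.le_def, hlo', hhi', ← forall_and]
    have hΛB : Λ ⊆ B := by
      intro x hx
      rw [memΛ] at hx
      rw [memB]
      intro i
      have := hx i
      have := abs_le.mp (hRρ i)
      omega
    have hΛ'B : Λ' ⊆ B := by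
      intro x hx
      rw [memΛ', memΛ] at hx
      rw [memB]
      intro i
      have h1 := hx i
      have h2 := abs_le.mp (hRρ i)
      simp only [Pi.sub_apply] at h1
      omega
    have hAB : A ⊆ B \ Λ := by
      intro x hx
      rw [hA, Finset.mem_sdiff] at hx
      rw [Finset.mem_sdiff]
      exact ⟨hΛ'B hx.1, hx.2⟩
    have cardB : (B.card : ℝ) = a ^ d := by
      rw [hB, Pi.card_Icc]
      simp only [hlo', hhi', Int.card_Icc]
      have h : ((N : ℤ) + R + 1 - -((N : ℤ) + R)).toNat = 2 * N + 2 * R + 1 := by omega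
      rw [h, Finset.prod_const, Finset.card_univ, Fintype.card_fin]
      rw [ha]
      push_cast
      ring
    have hcardA : (A.card : ℝ) ≤ (d : ℝ) * (2 * R) * a ^ κ := by
      have h1 : A.card ≤ (B \ Λ).card := Finset.card_le_card hAB
      have h2 : (B \ Λ).card = B.card - Λ.card := Finset.card_sdiff_of_subset hΛB
      have h3 : Λ.card ≤ B.card := Finset.card_le_card hΛB
      have h4 : (A.card : ℝ) ≤ (B.card : ℝ) - (Λ.card : ℝ) := by
        rw [h2] at h1
        have := Nat.cast_le (α := ℝ).2 h1
        rw [Nat.cast_sub h3] at this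
        exact this
      rw [cardB, cardΛ] at h4
      have h6 : a - (2 * (N : ℝ) + 1) = 2 * R := by rw [ha]; ring
      have hdcast : ((κ : ℝ) + 1) = (d : ℝ) := by rw [hκd]; push_cast; ring
      calc (A.card : ℝ) ≤ a ^ d - (2 * (N : ℝ) + 1) ^ d := h4
        _ ≤ ((κ : ℝ) + 1) * (2 * R) * a ^ κ := by
            have := pow_succ_sub_pow_succ_le a (2 * (N : ℝ) + 1) (by positivity)
              (by rw [ha]
                  have : (0:ℝ) ≤ (R:ℝ) := Nat.cast_nonneg R
                  linarith) κ
            rw [← hκd, h6] at this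
            exact this
        _ = (d : ℝ) * (2 * R) * a ^ κ := by rw [hdcast]
    -- termwise bound
    have hterm : ∀ x ∈ A, C₀ * ((1 + ‖toE (x - ρ)‖) ^ κ)⁻¹ ≤ C₀ * (8 ^ κ / a ^ κ) := by
      intro x hx
      rw [hA, Finset.mem_sdiff] at hx
      obtain ⟨hx1, hx2⟩ := hx
      rw [memΛ] at hx2
      push_neg at hx2
      obtain ⟨i, hi'⟩ := hx2
      have hzi : (N : ℤ) + 1 - R ≤ |x i - ρ i| := by
        have h2 := abs_le.mp (hRρ i)
        rw [le_abs]
        omega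
      have hco := coord_le_norm_toE (x - ρ) i
      have hcoord : ((x - ρ) i : ℝ) = ((x i - ρ i : ℤ) : ℝ) := by
        simp [Pi.sub_apply]
      have hzr : ((N : ℝ) + 1 - R) ≤ |((x i - ρ i : ℤ) : ℝ)| := by
        rw [← Int.cast_abs]
        exact_mod_cast hzi
      have hnorm : ((N : ℝ) + 1 - R) ≤ ‖toE (x - ρ)‖ := by
        rw [hcoord] at hco
        linarith
      have hNR : (2 * (R : ℝ) + 1) ≤ (N : ℝ) := by exact_mod_cast hcase
      have h8 : a / 8 ≤ 1 + ‖toE (x - ρ)‖ := by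
        rw [ha]
        linarith
      have h8pos : (0 : ℝ) < a / 8 := by positivity
      have h9 : (a / 8) ^ κ ≤ (1 + ‖toE (x - ρ)‖) ^ κ :=
        pow_le_pow_left₀ h8pos.le h8 κ
      have h10 : ((1 + ‖toE (x - ρ)‖) ^ κ)⁻¹ ≤ ((a / 8) ^ κ)⁻¹ :=
        inv_anti₀ (by positivity) h9
      have h11 : ((a / 8) ^ κ)⁻¹ = 8 ^ κ / a ^ κ := by
        rw [div_pow]
        rw [inv_div]
      calc C₀ * ((1 + ‖toE (x - ρ)‖) ^ κ)⁻¹ ≤ C₀ * ((a / 8) ^ κ)⁻¹ :=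
            mul_le_mul_of_nonneg_left h10 hC₀
        _ = C₀ * (8 ^ κ / a ^ κ) := by rw [h11]
    have hsum := Finset.sum_le_card_nsmul A _ _ hterm
    rw [nsmul_eq_mul] at hsum
    have hfinal : (A.card : ℝ) * (C₀ * (8 ^ κ / a ^ κ))
        ≤ (d : ℝ) * (2 * R) * a ^ κ * (C₀ * (8 ^ κ / a ^ κ)) :=
      mul_le_mul_of_nonneg_right hcardA (by positivity)
    have heq : (d : ℝ) * (2 * R) * a ^ κ * (C₀ * (8 ^ κ / a ^ κ))
        = C₀ * ((d : ℝ) * (2 * R) * 8 ^ κ) := by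
      field_simp
    calc ∑ x ∈ A, C₀ * ((1 + ‖toE (x - ρ)‖) ^ κ)⁻¹
        ≤ (A.card : ℝ) * (C₀ * (8 ^ κ / a ^ κ)) := hsum
      _ ≤ (d : ℝ) * (2 * R) * a ^ κ * (C₀ * (8 ^ κ / a ^ κ)) := hfinal
      _ = C₀ * ((d : ℝ) * (2 * R) * 8 ^ κ) := heq
      _ ≤ C₀ * ((4 * R + 1 : ℝ) ^ d + (d : ℝ) * (2 * R) * 8 ^ κ) := by nlinarith
end

section
/- Tail estimate for periodized decaying functions: let d ≥ 1, j ≥ 3, and h : ℤ^d → ℝ with |h(ℓ)| ≤ C₀(1+|ℓ|)^{2−d−j}. Then for all N ≥ 1 and all ℓ ∈ ℤ^d with |ℓ|_∞ ≤ N, |∑_{z∈ℤ^d, z≠0} h(ℓ + 2Nz)| ≤ C N^{2−d−j}, with C depending only on d, j, C₀. -/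
open scoped BigOperators

/-!
For `z ≠ 0` and `|ℓ|_∞ ≤ N` every coordinate satisfies `|ℓᵢ + 2N zᵢ| ≥ N |zᵢ|`, hence
`1 + ‖ℓ + 2Nz‖ ≥ N ‖z‖` and, the exponent `s = 2 - d - j` being negative, each term of the sum is
at most `C₀ N^s ‖z‖^s`. Since `s < -d`, the lattice sum `∑_{z ≠ 0} ‖z‖^s` converges, and
`C₀ ∑_{z ≠ 0} ‖z‖^s` (plus one, to make it positive) is the constant.
-/

lemma toE_mem_span_int {d : ℕ} (z : Fin d → ℤ) :
    toE z ∈ Submodule.span ℤ (Set.range (EuclideanSpace.basisFun (Fin d) ℝ).toBasis) := by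
  rw [Module.Basis.mem_span_iff_repr_mem]
  exact fun i => ⟨z i, rfl⟩

lemma toE_zero {d : ℕ} : toE (0 : Fin d → ℤ) = 0 := by
  ext i
  simp [toE]

lemma toE_injective {d : ℕ} : Function.Injective (toE (d := d)) := fun z w h => by
  funext i
  simpa [toE] using congrArg (fun x : EuclideanSpace ℝ (Fin d) => x i) h

lemma summable_norm_toE_rpow {d : ℕ} {r : ℝ} (hr : r < -d) :
    Summable fun z : Fin d → ℤ => ‖toE z‖ ^ r := by
  set L := Submodule.span ℤ (Set.range (EuclideanSpace.basisFun (Fin d) ℝ).toBasis)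
  have hrank : Module.finrank ℤ L ≤ d :=
    (finrank_range_le_card (R := ℤ) _).trans (by simp)
  have hL : Summable fun x : L => ‖x‖ ^ r := ZLattice.summable_norm_rpow L r
    (hr.trans_le (by simpa using hrank : -(d : ℝ) ≤ -(Module.finrank ℤ L : ℝ)))
  let i : (Fin d → ℤ) → L := fun z => ⟨toE z, toE_mem_span_int z⟩
  have hi : Function.Injective i := fun z w h => toE_injective (congrArg Subtype.val h)
  exact (hL.comp_injective hi :)

lemma toE_smul {d : ℕ} (n : ℤ) (z : Fin d → ℤ) : toE (n • z) = (n : ℝ) • toE z := by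
  ext i
  simp [toE]

lemma norm_toE_le_of_abs_le {d : ℕ} {x y : Fin d → ℤ} (h : ∀ i, |x i| ≤ |y i|) :
    ‖toE x‖ ≤ ‖toE y‖ := by
  rw [EuclideanSpace.norm_eq, EuclideanSpace.norm_eq]
  gcongr with i
  simpa [toE, ← Int.cast_abs] using h i

lemma Int.mul_abs_le_abs_add_two_mul {a n z : ℤ} (ha : |a| ≤ n) : n * |z| ≤ |a + 2 * n * z| := by
  rcases eq_or_ne z 0 with rfl | hz
  · simp
  have h1 := Int.one_le_abs hz
  have h2 : 2 * n * |z| - |a| ≤ |a + 2 * n * z| := by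
    have := abs_sub_abs_le_abs_sub (2 * n * z) (-a)
    rw [abs_mul, abs_of_nonneg (by linarith [abs_nonneg a] : (0 : ℤ) ≤ 2 * n), abs_neg,
      sub_neg_eq_add, add_comm] at this
    linarith
  nlinarith [abs_nonneg a]

lemma mul_norm_toE_le_norm_toE_add_two_mul_smul {d N : ℕ} {ℓ : Fin d → ℤ}
    (hℓ : ∀ i, |ℓ i| ≤ (N : ℤ)) (z : Fin d → ℤ) :
    (N : ℝ) * ‖toE z‖ ≤ ‖toE (ℓ + (2 * (N : ℤ)) • z)‖ := by
  have hNz : (N : ℝ) * ‖toE z‖ = ‖toE ((N : ℤ) • z)‖ := by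
    rw [toE_smul, norm_smul]; simp
  rw [hNz]
  refine norm_toE_le_of_abs_le fun i => ?_
  simpa [abs_mul] using Int.mul_abs_le_abs_add_two_mul (z := z i) (hℓ i)

lemma one_add_norm_toE_rpow_le {d N : ℕ} {s : ℝ} (hs : s ≤ 0) (hN : 1 ≤ N) {ℓ : Fin d → ℤ}
    (hℓ : ∀ i, |ℓ i| ≤ (N : ℤ)) {z : Fin d → ℤ} (hz : z ≠ 0) :
    (1 + ‖toE (ℓ + (2 * (N : ℤ)) • z)‖) ^ s ≤ (N : ℝ) ^ s * ‖toE z‖ ^ s := by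
  have hNpos : (0 : ℝ) < N := by exact_mod_cast hN
  have hzpos : 0 < ‖toE z‖ := norm_pos_iff.2 fun h0 => hz (toE_injective (h0.trans toE_zero.symm))
  rw [← Real.mul_rpow hNpos.le hzpos.le]
  refine Real.rpow_le_rpow_of_nonpos (by positivity) ?_ hs
  linarith [mul_norm_toE_le_norm_toE_add_two_mul_smul hℓ z]

theorem stmt14_general (d j : ℕ) (hj : 3 ≤ j) (C₀ : ℝ) (hC₀ : 0 ≤ C₀) :
    ∃ C : ℝ, 0 < C ∧ ∀ N : ℕ, 1 ≤ N → ∀ h : (Fin d → ℤ) → ℝ,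
      (∀ ℓ, |h ℓ| ≤ C₀ * (1 + ‖toE ℓ‖) ^ ((2 : ℝ) - d - j)) →
      ∀ ℓ : Fin d → ℤ, (∀ i, |ℓ i| ≤ (N : ℤ)) →
        |∑' z : {z : Fin d → ℤ // z ≠ 0}, h (ℓ + (2 * (N : ℤ)) • z.1)|
          ≤ C * (N : ℝ) ^ ((2 : ℝ) - d - j) := by
  set s : ℝ := 2 - d - j with hs_def
  have hs : s < -d := by
    have : (3 : ℝ) ≤ j := by exact_mod_cast hj
    linarith
  have hs0 : s ≤ 0 := by linarith [Nat.cast_nonneg (α := ℝ) d]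
  have hsum : Summable fun z : {z : Fin d → ℤ // z ≠ 0} => ‖toE z.1‖ ^ s :=
    (summable_norm_toE_rpow hs).comp_injective Subtype.val_injective
  set S := ∑' z : {z : Fin d → ℤ // z ≠ 0}, ‖toE z.1‖ ^ s
  have hS : 0 ≤ S := tsum_nonneg fun _ => by positivity
  refine ⟨C₀ * S + 1, by positivity, fun N hN h hh ℓ hℓ => ?_⟩
  have hterm (z : {z : Fin d → ℤ // z ≠ 0}) :
      ‖h (ℓ + (2 * (N : ℤ)) • z.1)‖ ≤ C₀ * (N : ℝ) ^ s * ‖toE z.1‖ ^ s := by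
    rw [Real.norm_eq_abs, mul_assoc]
    exact (hh _).trans (mul_le_mul_of_nonneg_left
      (one_add_norm_toE_rpow_le hs0 hN hℓ z.2) hC₀)
  calc |∑' z : {z : Fin d → ℤ // z ≠ 0}, h (ℓ + (2 * (N : ℤ)) • z.1)|
      ≤ ∑' z : {z : Fin d → ℤ // z ≠ 0}, C₀ * (N : ℝ) ^ s * ‖toE z.1‖ ^ s :=
        tsum_of_norm_bounded (hsum.mul_left _).hasSum hterm
    _ = C₀ * S * (N : ℝ) ^ s := by rw [tsum_mul_left]; ring
    _ ≤ (C₀ * S + 1) * (N : ℝ) ^ s := by gcongr; linarith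

/-- tail estimate for periodized decaying functions: for `j ≥ 3` and
`|h(ℓ)| ≤ C₀(1+|ℓ|)^{2−d−j}`, one has `|∑_{z≠0} h(ℓ+2Nz)| ≤ C N^{2−d−j}` for all
`N ≥ 1` and `|ℓ|_∞ ≤ N`, with `C = C(d,j,C₀)`. -/
theorem stmt14 (d j : ℕ) (hd : 1 ≤ d) (hj : 3 ≤ j) (C₀ : ℝ) (hC₀ : 0 ≤ C₀) :
    ∃ C : ℝ, 0 < C ∧ ∀ N : ℕ, 1 ≤ N → ∀ h : (Fin d → ℤ) → ℝ,
      (∀ ℓ, |h ℓ| ≤ C₀ * (1 + ‖toE ℓ‖) ^ ((2 : ℝ) - d - j)) →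
      ∀ ℓ : Fin d → ℤ, (∀ i, |ℓ i| ≤ (N : ℤ)) →
        |∑' z : {z : Fin d → ℤ // z ≠ 0}, h (ℓ + (2 * (N : ℤ)) • z.1)|
          ≤ C * (N : ℝ) ^ ((2 : ℝ) - d - j) :=
  stmt14_general d j hj C₀ hC₀
end

section
/- Absorbed Caccioppoli combination: suppose e : Λ → ℝ^k is a function on a lattice Λ ⊂ ℝ^d and annuli Λ_r denote points in (−r,r]^d (scaled boxes). Assume (i) the pointwise bound sup_{Λ\Λ_r}|e| ≤ C(N^{−d} + r^{−d} log r · sup_{Λ\Λ_r}|e| + r^{−d} ‖e‖_{ℓ²(Λ_r)}) for all r ≥ r₀, and (ii) the Caccioppoli bound ‖e‖_{ℓ²(Λ_{r})} ≤ C′ ‖e‖_{ℓ²(Λ_{4r}\Λ_r)} for r₁ ≤ r ≤ N/8, and (iii) ‖e‖_{ℓ²(Λ_{4r}\Λ_r)} ≤ (number of points)^{1/2} sup_{Λ\Λ_r}|e| ≤ C″ r^{d/2} sup_{Λ\Λ_r}|e|. Then there exists r₃ (independent of N) such that sup_{Λ\Λ_{r₃}}|e| ≤ C₄ N^{−d}.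 -/
open Filter Real

/-- absorbed Caccioppoli combination: if
`ω(r) ≤ C(N^{−d} + r^{−d} log r · ω(r) + r^{−d} s(r))` for `r ≥ r₀`,
`s(r) ≤ C′ a(r)` for `r₁ ≤ r ≤ N/8`, and `a(r) ≤ C″ r^{d/2} ω(r)`,
where `ω, s, a ≥ 0` (ω plays the role of `sup_{Λ\Λ_r}|e|`, `s` of `‖e‖_{ℓ²(Λ_r)}` and
`a` of `‖e‖_{ℓ²(Λ_{4r}\Λ_r)}`), then there are `r₃, C₄` independent of `N` such that
`ω(r₃) ≤ C₄ N^{−d}`. -/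
theorem stmt15 (d : ℕ) (hd : 1 ≤ d) (C C' C'' r₀ r₁ : ℝ)
    (hC : 0 < C) (hC' : 0 < C') (hC'' : 0 < C'') :
    ∃ r₃ C₄ : ℝ, 0 < C₄ ∧ 0 < r₃ ∧
      ∀ N : ℕ, 8 * r₃ ≤ (N : ℝ) →
      ∀ ω s a : ℝ → ℝ,
      (∀ r, 0 ≤ ω r) → (∀ r, 0 ≤ s r) → (∀ r, 0 ≤ a r) →
      (∀ r, r₀ ≤ r →
        ω r ≤ C * ((N : ℝ) ^ (-(d : ℝ)) + r ^ (-(d : ℝ)) * Real.log r * ω r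
                    + r ^ (-(d : ℝ)) * s r)) →
      (∀ r, r₁ ≤ r → r ≤ (N : ℝ) / 8 → s r ≤ C' * a r) →
      (∀ r, a r ≤ C'' * r ^ ((d : ℝ) / 2) * ω r) →
      ω r₃ ≤ C₄ * (N : ℝ) ^ (-(d : ℝ)) := by
  have hd0 : (0:ℝ) < (d:ℝ) := by exact_mod_cast hd
  -- term 1 tends to 0
  have t1 : Tendsto (fun r : ℝ => C * (Real.log r / r ^ (d:ℝ))) atTop (nhds 0) := by
    have := (isLittleO_log_rpow_atTop hd0).tendsto_div_nhds_zero
    simpa using (this.const_mul C)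
  have t2 : Tendsto (fun r : ℝ => C * C' * C'' * r ^ (-((d:ℝ)/2))) atTop (nhds 0) := by
    simpa using (tendsto_rpow_neg_atTop (by linarith : (0:ℝ) < (d:ℝ)/2)).const_mul (C * C' * C'')
  have tsum : Tendsto (fun r : ℝ => C * (Real.log r / r ^ (d:ℝ))
      + C * C' * C'' * r ^ (-((d:ℝ)/2))) atTop (nhds 0) := by
    simpa using t1.add t2
  have hev : ∀ᶠ r : ℝ in atTop, C * (Real.log r / r ^ (d:ℝ))
      + C * C' * C'' * r ^ (-((d:ℝ)/2)) < 1/2 :=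
    tsum.eventually_lt_const (by norm_num)
  obtain ⟨r₃, hr₃small, hr₃big⟩ :=
    (hev.and (eventually_ge_atTop (max 1 (max r₀ r₁)))).exists
  have hr₃1 : (1:ℝ) ≤ r₃ := le_trans (le_max_left _ _) hr₃big
  have hr₃0 : (0:ℝ) < r₃ := by linarith
  have hr₀ : r₀ ≤ r₃ := le_trans (le_trans (le_max_left _ _) (le_max_right _ _)) hr₃big
  have hr₁ : r₁ ≤ r₃ := le_trans (le_trans (le_max_right _ _) (le_max_right _ _)) hr₃big
  refine ⟨r₃, 2 * C, by positivity, hr₃0, ?_⟩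
  intro N hN ω s a hω0 hs0 ha0 hωb hsb hab
  have hN8 : r₃ ≤ (N:ℝ) / 8 := by linarith
  have h1 := hωb r₃ hr₀
  have h2 := hsb r₃ hr₁ hN8
  have h3 := hab r₃
  -- rewrite r₃ ^ (-(d:ℝ)) as (r₃ ^ (d:ℝ))⁻¹
  have hrn : r₃ ^ (-(d:ℝ)) = (r₃ ^ (d:ℝ))⁻¹ := Real.rpow_neg hr₃0.le _
  have hpow : r₃ ^ (-(d:ℝ)) * r₃ ^ ((d:ℝ)/2) = r₃ ^ (-((d:ℝ)/2)) := by
    rw [← Real.rpow_add hr₃0]; ring_nf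
  have hωr : 0 ≤ ω r₃ := hω0 r₃
  -- bound the s-term
  have hsterm : C * (r₃ ^ (-(d:ℝ)) * s r₃)
      ≤ C * C' * C'' * r₃ ^ (-((d:ℝ)/2)) * ω r₃ := by
    have hs2 : s r₃ ≤ C' * (C'' * r₃ ^ ((d:ℝ)/2) * ω r₃) :=
      h2.trans (by nlinarith [h3])
    have hp : 0 ≤ r₃ ^ (-(d:ℝ)) := (Real.rpow_pos_of_pos hr₃0 _).le
    calc C * (r₃ ^ (-(d:ℝ)) * s r₃)
        ≤ C * (r₃ ^ (-(d:ℝ)) * (C' * (C'' * r₃ ^ ((d:ℝ)/2) * ω r₃))) := by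
          apply mul_le_mul_of_nonneg_left _ hC.le
          exact mul_le_mul_of_nonneg_left hs2 hp
      _ = C * C' * C'' * (r₃ ^ (-(d:ℝ)) * r₃ ^ ((d:ℝ)/2)) * ω r₃ := by ring
      _ = C * C' * C'' * r₃ ^ (-((d:ℝ)/2)) * ω r₃ := by rw [hpow]
  -- bound the log term
  have hlog : C * (r₃ ^ (-(d:ℝ)) * Real.log r₃ * ω r₃)
      = C * (Real.log r₃ / r₃ ^ (d:ℝ)) * ω r₃ := by
    rw [hrn]; ring
  have key : ω r₃ ≤ C * (↑N) ^ (-(d:ℝ))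
      + (C * (Real.log r₃ / r₃ ^ (d:ℝ)) + C * C' * C'' * r₃ ^ (-((d:ℝ)/2))) * ω r₃ := by
    have := h1
    rw [mul_add, mul_add] at this
    calc ω r₃ ≤ C * (↑N) ^ (-(d:ℝ)) + C * (r₃ ^ (-(d:ℝ)) * Real.log r₃ * ω r₃)
        + C * (r₃ ^ (-(d:ℝ)) * s r₃) := by linarith [this]
      _ ≤ C * (↑N) ^ (-(d:ℝ)) + C * (Real.log r₃ / r₃ ^ (d:ℝ)) * ω r₃
        + C * C' * C'' * r₃ ^ (-((d:ℝ)/2)) * ω r₃ := by rw [hlog] at *; linarith [hsterm]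
      _ = _ := by ring
  have habs : (C * (Real.log r₃ / r₃ ^ (d:ℝ)) + C * C' * C'' * r₃ ^ (-((d:ℝ)/2))) * ω r₃
      ≤ (1/2) * ω r₃ := mul_le_mul_of_nonneg_right hr₃small.le hωr
  linarith
end
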